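/- Fix real parameters γ, α with γ > 1 and α > 0 and reals n_x, n_y. For Φ = (φ₁,φ₂,φ₃,φ₄) ∈ ℝ⁴ with φ₁ ≠ 0, set u = φ₂/φ₁, v = φ₃/φ₁, u_n = n_x u + n_y v, and let Ã(Φ), B̃(Φ) be the matrices Ã(Φ) = [[α²u, 0, 0, 0],[0, ((γ−1)/2)u, 0, 0],[0, 0, ((γ−1)/2)u, 0],[0, 2(γ−1)φ₄/φ₁, 0, (2−γ)u]] and B̃(Φ) = [[α²v, 0, 0, 0],[0, ((γ−1)/2)v, 0, 0],[0, 0, ((γ−1)/2)v, 0],[0, 0, 2(γ−1)φ₄/φ₁, (2−γ)v]]. If u_n ≥ 0 then Φᵀ ( n_x Ã(Φ) + n_y B̃(Φ) ) Φ ≥ 0, and if u_n = 0 then Φᵀ ( n_x Ã(Φ) + n_y B̃(Φ) ) Φ = 0. -/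
import Mathlib


open Matrix

/-- The derived matrix `Ã(Φ)` with free parameters set to zero. -/
noncomputable def matAtil0 (γ α : ℝ) (φ : Fin 4 → ℝ) : Matrix (Fin 4) (Fin 4) ℝ :=
  let u := φ 1 / φ 0
  let q := φ 3 / φ 0
  !![α ^ 2 * u, 0, 0, 0;
     0, (γ - 1) / 2 * u, 0, 0;
     0, 0, (γ - 1) / 2 * u, 0;
     0, 2 * (γ - 1) * q, 0, (2 - γ) * u]

/-- The derived matrix `B̃(Φ)` with free parameters set to zero. -/
noncomputable def matBtil0 (γ α : ℝ) (φ : Fin 4 → ℝ) : Matrix (Fin 4) (Fin 4) ℝ :=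
  let v := φ 2 / φ 0
  let q := φ 3 / φ 0
  !![α ^ 2 * v, 0, 0, 0;
     0, (γ - 1) / 2 * v, 0, 0;
     0, 0, (γ - 1) / 2 * v, 0;
     0, 0, 2 * (γ - 1) * q, (2 - γ) * v]

lemma key (γ α nx ny : ℝ) (Φ : Fin 4 → ℝ) (hφ1 : Φ 0 ≠ 0) :
    Φ ⬝ᵥ (nx • matAtil0 γ α Φ + ny • matBtil0 γ α Φ).mulVec Φ =
      (nx * (Φ 1 / Φ 0) + ny * (Φ 2 / Φ 0)) *
        (α ^ 2 * Φ 0 ^ 2 + (γ - 1) / 2 * (Φ 1 ^ 2 + Φ 2 ^ 2) + γ * Φ 3 ^ 2) := by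
  simp [matAtil0, matBtil0, dotProduct, mulVec, Fin.sum_univ_four, Matrix.vecHead, Matrix.vecTail]
  field_simp
  ring

/-- **No boundary conditions needed at outflow; zero contribution at a solid wall:**
if `u_n ≥ 0` then the boundary contraction `Φᵀ (n_x Ã + n_y B̃) Φ` is nonnegative, and if
`u_n = 0` it vanishes. -/
theorem stmt_9 (γ α nx ny : ℝ) (hγ : 1 < γ) (hα : 0 < α)
    (Φ : Fin 4 → ℝ) (hφ1 : Φ 0 ≠ 0) :
    (0 ≤ nx * (Φ 1 / Φ 0) + ny * (Φ 2 / Φ 0) →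
      0 ≤ Φ ⬝ᵥ (nx • matAtil0 γ α Φ + ny • matBtil0 γ α Φ).mulVec Φ)
    ∧ (nx * (Φ 1 / Φ 0) + ny * (Φ 2 / Φ 0) = 0 →
      Φ ⬝ᵥ (nx • matAtil0 γ α Φ + ny • matBtil0 γ α Φ).mulVec Φ = 0) := by
  rw [key γ α nx ny Φ hφ1]
  constructor
  · intro h
    apply mul_nonneg h
    have h1 : 0 ≤ α ^ 2 * Φ 0 ^ 2 := by positivity
    have h2 : 0 ≤ (γ - 1) / 2 * (Φ 1 ^ 2 + Φ 2 ^ 2) := by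
      apply mul_nonneg (by linarith) (by positivity)
    have h3 : 0 ≤ γ * Φ 3 ^ 2 := by
      apply mul_nonneg (by linarith) (by positivity)
    linarith
  · intro h; rw [h, zero_mul]
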